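/- Let X be a nonnegative integer-valued random variable with E[X] < ∞ satisfying the distributional equation X =_d P + Σ_{i=1}^N (X_i − 1)^+, where P ~ Po(α), N ~ Po(1), the X_i are i.i.d. copies of X, and all variables on the right are independent. Then P(X ≥ 1) = α. -/

import Mathlib

/-!
Taking expectations in the distributional equation and using Wald's identity for the random
sum gives `E[X] = α + E[N] · E[(X - 1)⁺] = α + E[(X - 1)⁺]`. On the other hand
`X = (X - 1)⁺ + 1{X ≥ 1}` pointwise, so `E[X] = E[(X - 1)⁺] + P(X ≥ 1)`. Since `E[X] < ∞`,
the common term `E[(X - 1)⁺]` cancels.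
-/

open MeasureTheory ProbabilityTheory
open scoped NNReal ENNReal

lemma MeasureTheory.Measure.tsum_measure_singleton_eq_measure_univ {α : Type*}
    [MeasurableSpace α] [Countable α] [MeasurableSingletonClass α] (μ : Measure α) :
    ∑' a, μ {a} = μ Set.univ := by
  simpa using μ.tsum_indicator_apply_singleton Set.univ MeasurableSet.univ

namespace ProbabilityTheory

lemma natCast_succ_mul_poissonMeasure_singleton_succ (r : ℝ≥0) (n : ℕ) :
    ((n + 1 : ℕ) : ℝ≥0∞) * poissonMeasure r {n + 1} = r * poissonMeasure r {n} := by
  rw [poissonMeasure_singleton, poissonMeasure_singleton, ← ENNReal.ofReal_natCast,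
    ← ENNReal.ofReal_coe_nnreal, ← ENNReal.ofReal_mul (by positivity),
    ← ENNReal.ofReal_mul (by positivity), Nat.factorial_succ]
  congr 1
  push_cast
  field_simp
  ring

lemma lintegral_natCast_poissonMeasure (r : ℝ≥0) :
    ∫⁻ n, (n : ℝ≥0∞) ∂poissonMeasure r = r := by
  rw [lintegral_countable', tsum_eq_zero_add' ENNReal.summable]
  simp only [natCast_succ_mul_poissonMeasure_singleton_succ, ENNReal.tsum_mul_left,
    Measure.tsum_measure_singleton_eq_measure_univ, measure_univ, Nat.cast_zero, zero_mul,
    zero_add, mul_one]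

end ProbabilityTheory

section RandomVariables

variable {Ω : Type*} [MeasurableSpace Ω] {μ : Measure Ω}

namespace MeasureTheory

lemma sum_range_eq_tsum_indicator_mul (n : ℕ) (a : ℕ → ℝ≥0∞) :
    ∑ i ∈ Finset.range n, a i = ∑' i, (Set.Ioi i).indicator (fun _ => 1) n * a i := by
  rw [sum_eq_tsum_indicator]
  congr 1 with i
  by_cases h : i < n <;> simp [Set.indicator, h]

lemma measurable_indicator_Ioi_comp {N : Ω → ℕ} (hN : Measurable N) (i : ℕ) :
    Measurable fun ω => (Set.Ioi i).indicator (fun _ => (1 : ℝ≥0∞)) (N ω) :=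
  (Measurable.of_discrete (f := (Set.Ioi i).indicator fun _ => 1)).comp hN

lemma lintegral_natCast_eq_tsum_measure_preimage_Ioi {N : Ω → ℕ} (hN : Measurable N) :
    ∫⁻ ω, (N ω : ℝ≥0∞) ∂μ = ∑' i, μ (N ⁻¹' Set.Ioi i) := by
  have hN_tsum (ω : Ω) : (N ω : ℝ≥0∞) = ∑' i, (Set.Ioi i).indicator (fun _ => 1) (N ω) := by
    simpa using sum_range_eq_tsum_indicator_mul (N ω) 1
  simp_rw [hN_tsum]
  rw [lintegral_tsum fun i => (measurable_indicator_Ioi_comp hN i).aemeasurable]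
  simp [lintegral_indicator_const_comp hN measurableSet_Ioi]

lemma lintegral_natCast_eq_lintegral_sub_one_add {X : Ω → ℕ} (hX : Measurable X) :
    ∫⁻ ω, (X ω : ℝ≥0∞) ∂μ = ∫⁻ ω, ((X ω - 1 : ℕ) : ℝ≥0∞) ∂μ + μ {ω | 1 ≤ X ω} := by
  have hsplit (ω : Ω) :
      (X ω : ℝ≥0∞) = ((X ω - 1 : ℕ) : ℝ≥0∞) + {ω | 1 ≤ X ω}.indicator 1 ω := by
    by_cases h : 1 ≤ X ω
    · rw [Set.indicator_of_mem (s := {ω | 1 ≤ X ω}) h, Pi.one_apply]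
      norm_cast
      omega
    · simp_all
  rw [lintegral_congr hsplit, lintegral_add_left (by fun_prop),
    lintegral_indicator_one (measurableSet_le measurable_const hX)]

end MeasureTheory

namespace ProbabilityTheory

lemma IdentDistrib.of_map_eq [NeZero μ] {β : Type*} [MeasurableSpace β] {f g : Ω → β}
    (hg : AEMeasurable g μ) (h : μ.map f = μ.map g) : IdentDistrib f g μ μ where
  aemeasurable_fst := .of_map_ne_zero (h ▸ (Measure.map_ne_zero_iff hg).2 (NeZero.ne μ))
  aemeasurable_snd := hg
  map_eq := h

lemma lintegral_natCast_of_map_eq_poissonMeasure {N : Ω → ℕ} {r : ℝ≥0} (hN : Measurable N)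
    (h : μ.map N = poissonMeasure r) : ∫⁻ ω, (N ω : ℝ≥0∞) ∂μ = r := by
  rw [← lintegral_map .of_discrete hN, h, lintegral_natCast_poissonMeasure]

theorem lintegral_sum_range_eq_mul_of_indepFun {N : Ω → ℕ} {Y : ℕ → Ω → ℝ≥0∞} {c : ℝ≥0∞}
    (hN : Measurable N) (hY : ∀ i, AEMeasurable (Y i) μ) (hindep : ∀ i, N ⟂ᵢ[μ] Y i)
    (hc : ∀ i, ∫⁻ ω, Y i ω ∂μ = c) :
    ∫⁻ ω, ∑ i ∈ Finset.range (N ω), Y i ω ∂μ = (∫⁻ ω, (N ω : ℝ≥0∞) ∂μ) * c := by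
  have hterm (i : ℕ) : ∫⁻ ω, (Set.Ioi i).indicator (fun _ => 1) (N ω) * Y i ω ∂μ
      = μ (N ⁻¹' Set.Ioi i) * c := by
    rw [lintegral_mul_eq_lintegral_mul_lintegral_of_indepFun''
      (measurable_indicator_Ioi_comp hN i).aemeasurable (hY i)
      ((hindep i).comp (φ := (Set.Ioi i).indicator fun _ => 1) .of_discrete measurable_id),
      lintegral_indicator_const_comp hN measurableSet_Ioi, one_mul, hc]
  simp_rw [sum_range_eq_tsum_indicator_mul]
  rw [lintegral_tsum fun i => (measurable_indicator_Ioi_comp hN i).aemeasurable.fun_mul (hY i),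
    lintegral_natCast_eq_tsum_measure_preimage_Ioi hN, ← ENNReal.tsum_mul_right]
  exact tsum_congr hterm

end ProbabilityTheory

end RandomVariables

theorem rde_prob_ge_one
    {Ω : Type*} [MeasurableSpace Ω] (μ : Measure Ω) [IsProbabilityMeasure μ]
    (α : ℝ≥0)
    (X P N : Ω → ℕ) (ξ : ℕ → Ω → ℕ)
    (hXm : Measurable X) (hPm : Measurable P) (hNm : Measurable N)
    (hξm : ∀ i, Measurable (ξ i))
    (hP : μ.map P = poissonMeasure α)
    (hN : μ.map N = poissonMeasure 1)
    (hξ : ∀ i, μ.map (ξ i) = μ.map X)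
    (hindep : iIndepFun
      (fun i : ℕ => (match i with
        | 0 => P
        | 1 => N
        | (j + 2) => ξ j : Ω → ℕ)) μ)
    (hRDE : μ.map (fun ω => P ω + ∑ i ∈ Finset.range (N ω), (ξ i ω - 1)) = μ.map X)
    (hint : Integrable (fun ω => (X ω : ℝ)) μ) :
    μ {ω | 1 ≤ X ω} = ENNReal.ofReal (α : ℝ) := by
  set c := ∫⁻ ω, ((X ω - 1 : ℕ) : ℝ≥0∞) ∂μ
  have hindep_Nξ (i : ℕ) : N ⟂ᵢ[μ] fun ω => ((ξ i ω - 1 : ℕ) : ℝ≥0∞) :=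
    (hindep.indepFun (i := 1) (j := i + 2) (by omega) : N ⟂ᵢ[μ] ξ i).comp measurable_id
      (.of_discrete (f := fun n : ℕ => ((n - 1 : ℕ) : ℝ≥0∞)))
  have hmeanξ (i : ℕ) : ∫⁻ ω, ((ξ i ω - 1 : ℕ) : ℝ≥0∞) ∂μ = c :=
    ((IdentDistrib.of_map_eq hXm.aemeasurable (hξ i)).comp
      (.of_discrete (f := fun n : ℕ => ((n - 1 : ℕ) : ℝ≥0∞)))).lintegral_eq
  have hc : c ≠ ∞ := by
    refine ne_top_of_le_ne_top ?_ (lintegral_mono fun ω => Nat.cast_le.2 (Nat.sub_le (X ω) 1))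
    simpa using hint.lintegral_lt_top.ne
  have hsum : c + α = c + μ {ω | 1 ≤ X ω} :=
    calc c + α = ∫⁻ ω, (P ω : ℝ≥0∞) ∂μ + (∫⁻ ω, (N ω : ℝ≥0∞) ∂μ) * c := by
          rw [lintegral_natCast_of_map_eq_poissonMeasure hPm hP,
            lintegral_natCast_of_map_eq_poissonMeasure hNm hN, ENNReal.coe_one, one_mul, add_comm]
      _ = ∫⁻ ω, (P ω : ℝ≥0∞) + ∑ i ∈ Finset.range (N ω), ((ξ i ω - 1 : ℕ) : ℝ≥0∞) ∂μ := by
          rw [lintegral_add_left (by fun_prop),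
            lintegral_sum_range_eq_mul_of_indepFun hNm (fun i => by fun_prop) hindep_Nξ hmeanξ]
      _ = ∫⁻ ω, (X ω : ℝ≥0∞) ∂μ := by
          simpa using ((IdentDistrib.of_map_eq hXm.aemeasurable hRDE).comp
            (.of_discrete (f := fun n : ℕ => (n : ℝ≥0∞)))).lintegral_eq
      _ = c + μ {ω | 1 ≤ X ω} := lintegral_natCast_eq_lintegral_sub_one_add hXm
  rw [ENNReal.ofReal_coe_nnreal]
  exact ((ENNReal.add_right_inj hc).1 hsum).symm
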